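/- arXiv:1506.02717 — 6 statements merged into one kernel-verified Lean document; each statement's English description precedes it below -/
import Mathlib

section
/- For all real x with |x| ≤ 0.23, we have ln(cos(2πx)) ≥ -4π²x². -/
/-!
Let `f t = log (cos t) + t ^ 2`. Its second derivative is `cos (2 t) / cos t ^ 2`, so `f` is
convex on `[-π/4, π/4]` and concave on `[π/4, π/2)`. Being even and convex, `f ≥ f 0 = 0` on
`[-π/4, π/4]`; by concavity `f ≥ min (f (π/4)) (f T)` on `[π/4, T]`. Hence `f ≥ 0` on
`[-T, T]` as soon as `f T ≥ 0`, and for `T = 2π · 0.23` this is the numerical fact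
`sin (0.04π) ≥ exp (-(0.46π)²)`.
-/

open Real Set

lemma hasDerivAt_log_cos_add_sq {t : ℝ} (ht : cos t ≠ 0) :
    HasDerivAt (fun t => log (cos t) + t ^ 2) (2 * t - tan t) t := by
  refine (((hasDerivAt_cos t).log ht).add (hasDerivAt_pow 2 t)).congr_deriv ?_
  rw [tan_eq_sin_div_cos]
  ring

lemma hasDerivAt_two_mul_sub_tan {t : ℝ} (ht : cos t ≠ 0) :
    HasDerivAt (fun t => 2 * t - tan t) (cos (2 * t) / cos t ^ 2) t := by
  refine (((hasDerivAt_id t).const_mul 2).sub (hasDerivAt_tan ht)).congr_deriv ?_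
  rw [cos_two_mul]
  field_simp

lemma convexOn_log_cos_add_sq_Icc :
    ConvexOn ℝ (Icc (-(π / 4)) (π / 4)) (fun t => log (cos t) + t ^ 2) := by
  have hcos : ∀ t ∈ Icc (-(π / 4)) (π / 4), cos t ≠ 0 := fun t ht =>
    (cos_pos_of_mem_Ioo ⟨by linarith [ht.1, pi_pos], by linarith [ht.2, pi_pos]⟩).ne'
  refine convexOn_of_hasDerivWithinAt2_nonneg (convex_Icc _ _)
    (fun t ht => (hasDerivAt_log_cos_add_sq (hcos t ht)).continuousAt.continuousWithinAt)
    (fun t ht => (hasDerivAt_log_cos_add_sq (hcos t (interior_subset ht))).hasDerivWithinAt)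
    (fun t ht => (hasDerivAt_two_mul_sub_tan (hcos t (interior_subset ht))).hasDerivWithinAt)
    (fun t ht => div_nonneg (cos_nonneg_of_mem_Icc ?_) (sq_nonneg _))
  rw [interior_Icc] at ht
  constructor <;> linarith [ht.1, ht.2]

lemma concaveOn_log_cos_add_sq_Ico :
    ConcaveOn ℝ (Ico (π / 4) (π / 2)) (fun t => log (cos t) + t ^ 2) := by
  have hcos : ∀ t ∈ Ico (π / 4) (π / 2), cos t ≠ 0 := fun t ht =>
    (cos_pos_of_mem_Ioo ⟨by linarith [ht.1, pi_pos], ht.2⟩).ne'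
  refine concaveOn_of_hasDerivWithinAt2_nonpos (convex_Ico _ _)
    (fun t ht => (hasDerivAt_log_cos_add_sq (hcos t ht)).continuousAt.continuousWithinAt)
    (fun t ht => (hasDerivAt_log_cos_add_sq (hcos t (interior_subset ht))).hasDerivWithinAt)
    (fun t ht => (hasDerivAt_two_mul_sub_tan (hcos t (interior_subset ht))).hasDerivWithinAt)
    (fun t ht => div_nonpos_of_nonpos_of_nonneg (cos_nonpos_of_pi_div_two_le_of_le ?_ ?_)
      (sq_nonneg _))
  all_goals rw [interior_Ico] at ht; linarith [ht.1, ht.2]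

lemma log_cos_add_sq_nonneg_of_abs_le_pi_div_four {t : ℝ} (ht : |t| ≤ π / 4) :
    0 ≤ log (cos t) + t ^ 2 := by
  obtain ⟨hlow, hhigh⟩ := abs_le.mp ht
  have h := convexOn_log_cos_add_sq_Icc.2 (x := t) (y := -t) ⟨hlow, hhigh⟩
    ⟨by linarith, by linarith⟩
    (by norm_num : (0 : ℝ) ≤ 1 / 2) (by norm_num : (0 : ℝ) ≤ 1 / 2) (by norm_num)
  simp only [smul_eq_mul, cos_neg, neg_sq] at h
  norm_num at h
  linarith

theorem neg_sq_le_log_cos_of_abs_le {T t : ℝ} (hT : T < π / 2) (hT_le : -T ^ 2 ≤ log (cos T))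
    (ht : |t| ≤ T) : -t ^ 2 ≤ log (cos t) := by
  rw [← cos_abs, ← sq_abs]
  rcases le_total |t| (π / 4) with hsmall | hlarge
  · have := log_cos_add_sq_nonneg_of_abs_le_pi_div_four (t := |t|) (by rwa [abs_abs])
    linarith
  · have hquarter := log_cos_add_sq_nonneg_of_abs_le_pi_div_four (t := π / 4)
      (by rw [abs_of_pos (by positivity)])
    have h := concaveOn_log_cos_add_sq_Ico.min_le_of_mem_Icc ⟨le_rfl, by linarith [pi_pos]⟩
      ⟨hlarge.trans ht, hT⟩ ⟨hlarge, ht⟩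
    have := le_min hquarter (by linarith : 0 ≤ log (cos T) + T ^ 2)
    linarith

lemma neg_sq_le_log_cos_forty_six_hundredths_pi :
    -(0.46 * π) ^ 2 ≤ log (cos (0.46 * π)) := by
  have hcos : cos (0.46 * π) = sin (0.04 * π) := by
    rw [← cos_pi_div_two_sub]
    ring_nf
  have hsin : 0.1252 ≤ sin (0.04 * π) := by
    have hcube : (0.04 * π) ^ 3 ≤ 0.126 ^ 3 := by
      gcongr
      linarith [pi_lt_d2]
    linarith [sin_gt_sub_cube (x := 0.04 * π) (by positivity), pi_gt_d2]
  have hexp : 8 ≤ exp ((0.46 * π) ^ 2) := calc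
    (8 : ℝ) ≤ ∑ i ∈ Finset.range 8, ((0.46 * 3.14 : ℝ) ^ 2) ^ i / i.factorial := by
      norm_num [Finset.sum_range_succ, Nat.factorial]
    _ ≤ exp ((0.46 * 3.14) ^ 2) := sum_le_exp_of_nonneg (by norm_num) 8
    _ ≤ exp ((0.46 * π) ^ 2) := by
      gcongr
      exact pi_gt_d2.le
  rw [hcos, le_log_iff_exp_le (by linarith), exp_neg, inv_le_iff_one_le_mul₀ (exp_pos _)]
  nlinarith

theorem log_cos_ge (x : ℝ) (hx : |x| ≤ 0.23) :
    Real.log (Real.cos (2 * Real.pi * x)) ≥ -4 * Real.pi ^ 2 * x ^ 2 := by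
  have ht : |2 * π * x| ≤ 0.46 * π := by
    rw [abs_mul, abs_of_pos (by positivity)]
    nlinarith [pi_pos]
  have hbound := neg_sq_le_log_cos_of_abs_le (by linarith [pi_pos])
    neg_sq_le_log_cos_forty_six_hundredths_pi ht
  linarith
end

section
/- Let P and Q be probability distributions on a finite set S such that for all x ∈ S, |P(x) − Q(x)| ≤ δ(x)·P(x) with δ(x) ≤ 1/4. Then the Kullback–Leibler divergence satisfies D_KL(P‖Q) ≤ 2·Σ_{x∈S} δ(x)² P(x). -/
/-!
Pointwise, `log (p / q) ≤ p / q - 1` gives `p log (p / q) ≤ (p - q) + (p - q)² / q`, i.e. the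
Kullback–Leibler divergence is bounded by the χ² divergence (the `p - q` terms sum to `0`).
The closeness hypothesis forces `q ≥ 3p/4 ≥ p/2`, so `(p - q)² / q ≤ δ² p² / q ≤ 2 δ² p`.
-/

open Finset

lemma Real.log_div_mul_le_sub_add_sq_div {p q : ℝ} (hp : 0 ≤ p) (hq : 0 < q) :
    Real.log (p / q) * p ≤ (p - q) + (p - q) ^ 2 / q := by
  rcases hp.eq_or_lt with rfl | hp
  · simp [sq, hq.ne']
  have hlog : Real.log (p / q) ≤ p / q - 1 := Real.log_le_sub_one_of_pos (div_pos hp hq)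
  calc Real.log (p / q) * p ≤ (p / q - 1) * p := mul_le_mul_of_nonneg_right hlog hp.le
    _ = (p - q) + (p - q) ^ 2 / q := by field_simp; ring

lemma Real.log_div_mul_le_of_abs_sub_le {p q d : ℝ} (hp : 0 ≤ p) (hd : d ≤ 1 / 4)
    (hpq : |p - q| ≤ d * p) :
    Real.log (p / q) * p ≤ (p - q) + 2 * (d ^ 2 * p) := by
  obtain ⟨hlow, hupp⟩ := abs_le.mp hpq
  rcases hp.eq_or_lt with rfl | hp
  · obtain rfl : q = 0 := by linarith
    simp
  have hdp : d * p ≤ p / 4 := by nlinarith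
  have hq : p / 2 ≤ q := by linarith
  have hsq : (p - q) ^ 2 ≤ (d * p) ^ 2 := sq_le_sq' (by linarith) hupp
  have hchi : (p - q) ^ 2 / q ≤ 2 * (d ^ 2 * p) := by
    rw [div_le_iff₀ (by linarith)]
    nlinarith [sq_nonneg d]
  linarith [Real.log_div_mul_le_sub_add_sq_div hp.le (by linarith : 0 < q)]

theorem kl_le_of_close_general {S : Type*} [Fintype S] (P Q δ : S → ℝ)
    (hP : ∀ x, 0 ≤ P x)
    (hPsum : ∑ x, P x = 1) (hQsum : ∑ x, Q x = 1)
    (hδ : ∀ x, δ x ≤ 1 / 4)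
    (hclose : ∀ x, |P x - Q x| ≤ δ x * P x) :
    ∑ x, Real.log (P x / Q x) * P x ≤ 2 * ∑ x, δ x ^ 2 * P x := by
  calc ∑ x, Real.log (P x / Q x) * P x
      ≤ ∑ x, ((P x - Q x) + 2 * (δ x ^ 2 * P x)) :=
        sum_le_sum fun x _ => Real.log_div_mul_le_of_abs_sub_le (hP x) (hδ x) (hclose x)
    _ = (∑ x, P x - ∑ x, Q x) + 2 * ∑ x, δ x ^ 2 * P x := by
        rw [sum_add_distrib, sum_sub_distrib, ← mul_sum]
    _ = 2 * ∑ x, δ x ^ 2 * P x := by rw [hPsum, hQsum]; ring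

/-- KL divergence bound: if `|P x − Q x| ≤ δ x · P x` with `δ x ≤ 1/4`, then
`D_KL(P‖Q) ≤ 2 Σ δ(x)² P(x)`. -/
theorem kl_le_of_close {S : Type*} [Fintype S] (P Q δ : S → ℝ)
    (hP : ∀ x, 0 ≤ P x) (hQ : ∀ x, 0 ≤ Q x)
    (hPsum : ∑ x, P x = 1) (hQsum : ∑ x, Q x = 1)
    (hδ : ∀ x, δ x ≤ 1 / 4)
    (hclose : ∀ x, |P x - Q x| ≤ δ x * P x) :
    ∑ x, Real.log (P x / Q x) * P x ≤ 2 * ∑ x, δ x ^ 2 * P x :=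
  kl_le_of_close_general P Q δ hP hPsum hQsum hδ hclose
end

section
/- Let Λ be a one-dimensional lattice in ℝ. Then E_{x ∼ D_Λ}[‖x‖²] ≤ 1/(2π), where D_Λ is the discrete Gaussian on Λ with parameter 1. -/
/-!
Write `θ(a) = ρ(aℤ)` and `M(a) = ∑_{x ∈ aℤ} ‖x‖² ρ(x)`, so that the claim is `2π M(a) ≤ θ(a)`.
Poisson summation gives `a θ(a) = θ(1/a)`, and `θ` is decreasing on `(0, ∞)`, so `a ↦ a θ(a)`
is increasing there. Its derivative `θ(a) - 2π M(a)` is therefore nonnegative; to avoid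
differentiating a series we replace the derivative by difference quotients, bounding
`θ(c) - θ(b)` from below termwise by the tangent-line inequality `1 + x ≤ eˣ` and letting
`c → b⁻`.
-/

open scoped Real
open Real Filter Topology Set

noncomputable section

def latticeGaussMass (a : ℝ) : ℝ :=
  ∑' k : ℤ, exp (-π * ((k : ℝ) * a) ^ 2)

def latticeGaussSecondMoment (a : ℝ) : ℝ :=
  ∑' k : ℤ, ((k : ℝ) * a) ^ 2 * exp (-π * ((k : ℝ) * a) ^ 2)

end

section

variable {a b c : ℝ}

lemma summable_exp_neg_pi_mul_int_mul_sq (ha : a ≠ 0) :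
    Summable fun k : ℤ ↦ exp (-π * ((k : ℝ) * a) ^ 2) := by
  simpa [mul_pow, mul_comm] using summable_pow_mul_jacobiTheta₂_term_bound 0 (pow_pos
    (abs_pos.2 ha) 2) 0

lemma summable_sq_mul_exp_neg_pi_mul_int_mul_sq (ha : a ≠ 0) :
    Summable fun k : ℤ ↦ ((k : ℝ) * a) ^ 2 * exp (-π * ((k : ℝ) * a) ^ 2) := by
  have h := (summable_pow_mul_jacobiTheta₂_term_bound 0 (pow_pos (abs_pos.2 ha) 2) 2).mul_left
    (a ^ 2)
  simp only [sq_abs, mul_zero, zero_mul, sub_zero] at h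
  refine h.congr fun k ↦ ?_
  rw [Int.cast_abs, sq_abs]
  ring_nf

lemma latticeGaussMass_pos (ha : a ≠ 0) : 0 < latticeGaussMass a :=
  (summable_exp_neg_pi_mul_int_mul_sq ha).tsum_pos (fun _ ↦ (exp_pos _).le) 0 (exp_pos _)

lemma latticeGaussMass_abs (a : ℝ) : latticeGaussMass |a| = latticeGaussMass a := by
  simp [latticeGaussMass, mul_pow]

lemma latticeGaussSecondMoment_abs (a : ℝ) :
    latticeGaussSecondMoment |a| = latticeGaussSecondMoment a := by
  simp [latticeGaussSecondMoment, mul_pow]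

lemma antitoneOn_latticeGaussMass : AntitoneOn latticeGaussMass (Ioi 0) := by
  intro b hb c hc hbc
  refine (summable_exp_neg_pi_mul_int_mul_sq hc.ne').tsum_le_tsum (fun k ↦ ?_)
    (summable_exp_neg_pi_mul_int_mul_sq hb.ne')
  refine exp_le_exp.2 (mul_le_mul_of_nonpos_left ?_ (neg_nonpos.2 pi_pos.le))
  rw [mul_pow, mul_pow]
  exact mul_le_mul_of_nonneg_left (pow_le_pow_left₀ (le_of_lt hb) hbc 2) (sq_nonneg _)

lemma mul_latticeGaussMass (ha : 0 < a) : a * latticeGaussMass a = latticeGaussMass a⁻¹ := by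
  have hsqrt : (a ^ 2) ^ (1 / 2 : ℝ) = a := by rw [← sqrt_eq_rpow, sqrt_sq ha.le]
  have h := tsum_exp_neg_mul_int_sq (pow_pos ha 2)
  rw [hsqrt] at h
  have hleft : latticeGaussMass a = ∑' k : ℤ, exp (-π * a ^ 2 * (k : ℝ) ^ 2) := by
    simp only [latticeGaussMass]; congr 1; ext k; ring_nf
  have hright : latticeGaussMass a⁻¹ = ∑' k : ℤ, exp (-π / a ^ 2 * (k : ℝ) ^ 2) := by
    simp only [latticeGaussMass]; congr 1; ext k; ring_nf
  rw [hleft, hright, h]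
  field_simp

lemma monotoneOn_mul_latticeGaussMass : MonotoneOn (fun a ↦ a * latticeGaussMass a) (Ioi 0) := by
  intro b hb c hc hbc
  simp only [mul_latticeGaussMass hb, mul_latticeGaussMass hc]
  exact antitoneOn_latticeGaussMass (mem_Ioi.2 (inv_pos.2 hc)) (mem_Ioi.2 (inv_pos.2 hb)) (inv_anti₀ hb hbc)

lemma pi_mul_sq_sub_sq_mul_latticeGaussSecondMoment_le (hb : b ≠ 0) (hc : c ≠ 0) :
    π * (b ^ 2 - c ^ 2) * latticeGaussSecondMoment b ≤
      b ^ 2 * (latticeGaussMass c - latticeGaussMass b) := by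
  have hterm (k : ℤ) : π * (b ^ 2 - c ^ 2) * (((k : ℝ) * b) ^ 2 * exp (-π * ((k : ℝ) * b) ^ 2)) ≤
      b ^ 2 * (exp (-π * ((k : ℝ) * c) ^ 2) - exp (-π * ((k : ℝ) * b) ^ 2)) := by
    have htangent := add_one_le_exp (π * (b ^ 2 - c ^ 2) * (k : ℝ) ^ 2)
    have hsplit : exp (-π * ((k : ℝ) * c) ^ 2) =
        exp (π * (b ^ 2 - c ^ 2) * (k : ℝ) ^ 2) * exp (-π * ((k : ℝ) * b) ^ 2) := by
      rw [← exp_add]; ring_nf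
    rw [hsplit]
    have := mul_le_mul_of_nonneg_right htangent (exp_pos (-π * ((k : ℝ) * b) ^ 2)).le
    have := mul_le_mul_of_nonneg_left this (sq_nonneg b)
    linarith
  rw [latticeGaussSecondMoment, latticeGaussMass, latticeGaussMass,
    ← (summable_exp_neg_pi_mul_int_mul_sq hc).tsum_sub (summable_exp_neg_pi_mul_int_mul_sq hb),
    ← tsum_mul_left, ← tsum_mul_left]
  exact ((summable_sq_mul_exp_neg_pi_mul_int_mul_sq hb).mul_left _).tsum_le_tsum hterm
    (((summable_exp_neg_pi_mul_int_mul_sq hc).sub (summable_exp_neg_pi_mul_int_mul_sq hb)).mul_left _)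

lemma pi_mul_mul_add_mul_latticeGaussSecondMoment_le (hc : 0 < c) (hcb : c < b) :
    π * c * (b + c) * latticeGaussSecondMoment b ≤ b ^ 2 * latticeGaussMass b := by
  have hb : 0 < b := hc.trans hcb
  have htangent := pi_mul_sq_sub_sq_mul_latticeGaussSecondMoment_le hb.ne' hc.ne'
  have hmono : c * latticeGaussMass c ≤ b * latticeGaussMass b :=
    monotoneOn_mul_latticeGaussMass hc hb hcb.le
  refine le_of_mul_le_mul_left ?_ (sub_pos.2 hcb)
  calc (b - c) * (π * c * (b + c) * latticeGaussSecondMoment b)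
      = c * (π * (b ^ 2 - c ^ 2) * latticeGaussSecondMoment b) := by ring
    _ ≤ c * (b ^ 2 * (latticeGaussMass c - latticeGaussMass b)) := by gcongr
    _ = b ^ 2 * (c * latticeGaussMass c - c * latticeGaussMass b) := by ring
    _ ≤ b ^ 2 * (b * latticeGaussMass b - c * latticeGaussMass b) := by gcongr
    _ = (b - c) * (b ^ 2 * latticeGaussMass b) := by ring

lemma two_pi_mul_latticeGaussSecondMoment_le_of_pos (hb : 0 < b) :
    2 * π * latticeGaussSecondMoment b ≤ latticeGaussMass b := by
  have hlim : Tendsto (fun c ↦ π * c * (b + c) * latticeGaussSecondMoment b) (𝓝[<] b)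
      (𝓝 (π * b * (b + b) * latticeGaussSecondMoment b)) :=
    (Continuous.tendsto (by fun_prop) b).mono_left nhdsWithin_le_nhds
  have hbound : ∀ᶠ c in 𝓝[<] b,
      π * c * (b + c) * latticeGaussSecondMoment b ≤ b ^ 2 * latticeGaussMass b :=
    eventually_of_mem (Ioo_mem_nhdsLT hb) fun c hc ↦
      pi_mul_mul_add_mul_latticeGaussSecondMoment_le hc.1 hc.2
  have := le_of_tendsto hlim hbound
  refine le_of_mul_le_mul_left ?_ (pow_pos hb 2)
  linarith

lemma two_pi_mul_latticeGaussSecondMoment_le (ha : a ≠ 0) :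
    2 * π * latticeGaussSecondMoment a ≤ latticeGaussMass a := by
  simpa only [latticeGaussMass_abs, latticeGaussSecondMoment_abs] using
    two_pi_mul_latticeGaussSecondMoment_le_of_pos (abs_pos.2 ha)

end

/-- For a one-dimensional lattice `Λ = aℤ ⊂ ℝ`,
`E_{x ∼ D_Λ}[‖x‖²] ≤ 1/(2π)`. -/
theorem discrete_gaussian_second_moment (a : ℝ) (ha : a ≠ 0) :
    (∑' k : ℤ, ((k : ℝ) * a) ^ 2 * Real.exp (-π * ((k : ℝ) * a) ^ 2))
      / (∑' k : ℤ, Real.exp (-π * ((k : ℝ) * a) ^ 2)) ≤ 1 / (2 * π) := by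
  change latticeGaussSecondMoment a / latticeGaussMass a ≤ 1 / (2 * π)
  rw [div_le_div_iff₀ (latticeGaussMass_pos ha) (by positivity), mul_comm, one_mul]
  exact two_pi_mul_latticeGaussSecondMoment_le ha
end

section
/- The volume of the intersection of two Euclidean unit balls in ℝⁿ whose centers are at distance d ≤ 1, divided by the volume of one unit ball, is at least (d/3)·(1−d²)^{(n−1)/2}·√n, and in particular at least (d/3)·(1−d²)^{n/2}. -/
/-!
Move the centers to `0` and `d e₀` by an isometry. The lens then contains the cylinder
`(0, d) × B̄(0, √(1 - d²)) ⊆ ℝ × ℝⁿ⁻¹`; the transverse ball is closed so that the cylinder is not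
empty when `n = 1` and `d = 1`. Its volume is `d (1 - d²)^((n-1)/2) ωₙ₋₁`, where `ωₖ` is the
volume of the unit ball of `ℝᵏ`. Log-convexity of `Γ` gives `Γ(a + 1/2) √a ≤ Γ(a + 1)`, which
with `a = n/2` yields `√n ωₙ ≤ √(2π) ωₙ₋₁ ≤ 3 ωₙ₋₁`.
-/

open MeasureTheory Real Metric Set

namespace Real

theorem Gamma_add_half_mul_sqrt_le {a : ℝ} (ha : 0 < a) :
    Gamma (a + 1 / 2) * √a ≤ Gamma (a + 1) := by
  have hconv := Gamma_mul_add_mul_le_rpow_Gamma_mul_rpow_Gamma ha (by linarith : 0 < a + 1)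
    one_half_pos one_half_pos (by norm_num)
  have hmid : 1 / 2 * a + 1 / 2 * (a + 1) = a + 1 / 2 := by ring
  rw [hmid] at hconv
  calc Gamma (a + 1 / 2) * √a
      ≤ Gamma a ^ (1 / 2 : ℝ) * Gamma (a + 1) ^ (1 / 2 : ℝ) * a ^ (1 / 2 : ℝ) := by
        rw [sqrt_eq_rpow]; gcongr
    _ = (a * Gamma a) ^ (1 / 2 : ℝ) * Gamma (a + 1) ^ (1 / 2 : ℝ) := by
        rw [mul_rpow ha.le (Gamma_pos_of_pos ha).le]; ring
    _ = Gamma (a + 1) := by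
        rw [← Gamma_add_one ha.ne', ← mul_rpow (Gamma_pos_of_pos (by linarith)).le
          (Gamma_pos_of_pos (by linarith)).le, ← sqrt_eq_rpow, sqrt_mul_self
          (Gamma_pos_of_pos (by linarith)).le]

end Real

noncomputable def unitBallVolume (k : ℕ) : ℝ := √π ^ k / Gamma (k / 2 + 1)

theorem unitBallVolume_pos (k : ℕ) : 0 < unitBallVolume k := by
  have := Gamma_pos_of_pos (by positivity : (0 : ℝ) < k / 2 + 1)
  unfold unitBallVolume; positivity

theorem sqrt_mul_unitBallVolume_succ_le (k : ℕ) :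
    √(k + 1) * unitBallVolume (k + 1) ≤ 3 * unitBallVolume k := by
  have hG := Real.Gamma_add_half_mul_sqrt_le (by positivity : (0 : ℝ) < (k + 1) / 2)
  have h2π : √2 * √π ≤ 3 := by
    rw [← sqrt_mul zero_le_two, show (3 : ℝ) = √(3 ^ 2) by simp]
    gcongr; linarith [pi_lt_d2]
  have hsplit : √(k + 1) = √2 * √((k + 1) / 2) := by
    rw [← sqrt_mul zero_le_two]; ring_nf
  have hGk := Gamma_pos_of_pos (by positivity : (0 : ℝ) < k / 2 + 1)
  have hGk1 := Gamma_pos_of_pos (by positivity : (0 : ℝ) < ((k + 1 : ℕ) : ℝ) / 2 + 1)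
  have hhalf : (k + 1 : ℝ) / 2 + 1 / 2 = k / 2 + 1 := by ring
  rw [hhalf] at hG
  unfold unitBallVolume
  rw [mul_div_assoc', div_le_iff₀ hGk1, mul_div_assoc', div_mul_eq_mul_div, le_div_iff₀ hGk]
  push_cast
  calc √(k + 1) * √π ^ (k + 1) * Gamma (k / 2 + 1)
      = √π ^ k * (√2 * √π) * (Gamma (k / 2 + 1) * √((k + 1) / 2)) := by
        rw [hsplit, pow_succ]; ring
    _ ≤ √π ^ k * 3 * Gamma ((k + 1) / 2 + 1) := by gcongr
    _ = 3 * √π ^ k * Gamma ((k + 1) / 2 + 1) := by ring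

theorem EuclideanSpace.volume_closedBall_fin {k : ℕ} (x : EuclideanSpace ℝ (Fin k)) {r : ℝ}
    (hr : 0 ≤ r) : volume (closedBall x r) = ENNReal.ofReal (r ^ k * unitBallVolume k) := by
  rcases k.eq_zero_or_pos with rfl | hk
  · have : closedBall x r = univ := eq_univ_of_forall fun y => by
      simpa [Subsingleton.elim y x] using hr
    rw [this, ← preimage_univ, (PiLp.volume_preserving_ofLp (Fin 0)).measure_preimage
      MeasurableSet.univ.nullMeasurableSet]
    simp [unitBallVolume, volume_pi]
  · have : Nonempty (Fin k) := ⟨⟨0, hk⟩⟩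
    rw [EuclideanSpace.volume_closedBall, Fintype.card_fin, ENNReal.ofReal_mul (by positivity),
      ENNReal.ofReal_pow hr, unitBallVolume]

theorem volume_ball_inter_ball_eq_of_dist_eq {E : Type*} [NormedAddCommGroup E]
    [InnerProductSpace ℝ E] [FiniteDimensional ℝ E] [MeasurableSpace E] [BorelSpace E]
    {c₁ c₂ w : E} (h : dist c₁ c₂ = ‖w‖) (r s : ℝ) :
    volume (ball c₁ r ∩ ball c₂ s) = volume (ball 0 r ∩ ball w s) := by
  set R := Submodule.reflection (ℝ ∙ (c₂ - c₁ - w))ᗮ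
  have hR : R (c₂ - c₁) = w := Submodule.reflection_sub (by rw [← dist_eq_norm', h])
  let Φ := (IsometryEquiv.subRight c₁).trans R.toIsometryEquiv
  have hΦ : MeasurePreserving Φ :=
    R.measurePreserving.comp (measurePreserving_sub_right volume c₁)
  have hc₁ : Φ.symm 0 = c₁ := Φ.symm_apply_eq.2 (by simp [Φ])
  have hc₂ : Φ.symm w = c₂ := Φ.symm_apply_eq.2 (by simp [Φ, hR])
  rw [← hc₁, ← hc₂, ← Φ.preimage_ball, ← Φ.preimage_ball, ← preimage_inter,
    hΦ.measure_preimage (measurableSet_ball.inter measurableSet_ball).nullMeasurableSet]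

namespace EuclideanSpace

variable {m : ℕ}

def headTail (x : EuclideanSpace ℝ (Fin (m + 1))) : ℝ × EuclideanSpace ℝ (Fin m) :=
  (x 0, WithLp.toLp 2 (Fin.tail x))

theorem measurePreserving_headTail : MeasurePreserving (headTail (m := m)) :=
  ((MeasurePreserving.id volume).prod (PiLp.volume_preserving_toLp (Fin m))).comp
    ((volume_preserving_piFinSuccAbove (fun _ : Fin (m + 1) => ℝ) 0).comp
      (PiLp.volume_preserving_ofLp (Fin (m + 1))))

theorem norm_sq_eq_head_sq_add_norm_tail_sq (x : EuclideanSpace ℝ (Fin (m + 1))) :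
    ‖x‖ ^ 2 = (headTail x).1 ^ 2 + ‖(headTail x).2‖ ^ 2 := by
  simp [headTail, EuclideanSpace.norm_sq_eq, Fin.sum_univ_succ, Fin.tail]

def cylinder (h r : ℝ) : Set (EuclideanSpace ℝ (Fin (m + 1))) :=
  headTail ⁻¹' (Ioo 0 h ×ˢ closedBall 0 r)

theorem volume_cylinder (h r : ℝ) :
    volume (cylinder (m := m) h r) =
      ENNReal.ofReal h * volume (closedBall (0 : EuclideanSpace ℝ (Fin m)) r) := by
  rw [cylinder, measurePreserving_headTail.measure_preimage
    (measurableSet_Ioo.prod measurableSet_closedBall).nullMeasurableSet, Measure.volume_eq_prod,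
    Measure.prod_prod, Real.volume_Ioo, sub_zero]

theorem cylinder_subset_ball_inter_ball {d : ℝ} (hd1 : d ≤ 1) :
    cylinder (m := m) d √(1 - d ^ 2) ⊆ ball 0 1 ∩ ball (single 0 d) 1 := by
  rintro x ⟨⟨hx0, hxd⟩, hx⟩
  rw [mem_closedBall_zero_iff] at hx
  have htail : ‖(headTail x).2‖ ^ 2 ≤ 1 - d ^ 2 :=
    (Real.le_sqrt (norm_nonneg _) (by nlinarith)).1 hx
  constructor
  · rw [mem_ball_zero_iff, ← sq_lt_one_iff₀ (norm_nonneg _), norm_sq_eq_head_sq_add_norm_tail_sq]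
    nlinarith
  · rw [mem_ball_iff_norm, ← sq_lt_one_iff₀ (norm_nonneg _), norm_sq_eq_head_sq_add_norm_tail_sq]
    have : headTail (x - single 0 d) = ((headTail x).1 - d, (headTail x).2) := by
      ext i <;> simp [headTail, Fin.tail, Fin.succ_ne_zero]
    rw [this]
    nlinarith

end EuclideanSpace

theorem EuclideanSpace.volume_ball_one_toReal {k : ℕ} (x : EuclideanSpace ℝ (Fin (k + 1))) :
    (volume (ball x 1)).toReal = unitBallVolume (k + 1) := by
  rw [← Measure.addHaar_closedBall_eq_addHaar_ball, volume_closedBall_fin x zero_le_one, one_pow,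
    one_mul, ENNReal.toReal_ofReal (unitBallVolume_pos _).le]

open EuclideanSpace in
theorem le_volume_ball_inter_ball {m : ℕ} {c₁ c₂ : EuclideanSpace ℝ (Fin (m + 1))} {d : ℝ}
    (hd0 : 0 ≤ d) (hd1 : d ≤ 1) (hdist : dist c₁ c₂ = d) :
    d * √(1 - d ^ 2) ^ m * unitBallVolume m ≤ (volume (ball c₁ 1 ∩ ball c₂ 1)).toReal := by
  have hw : ‖single (0 : Fin (m + 1)) d‖ = d := by simp [abs_of_nonneg hd0]
  rw [volume_ball_inter_ball_eq_of_dist_eq (hdist.trans hw.symm)]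
  have hV := unitBallVolume_pos m
  calc d * √(1 - d ^ 2) ^ m * unitBallVolume m
      = (volume (cylinder (m := m) d √(1 - d ^ 2))).toReal := by
        rw [volume_cylinder, volume_closedBall_fin 0 (sqrt_nonneg _), ENNReal.toReal_mul,
          ENNReal.toReal_ofReal hd0, ENNReal.toReal_ofReal (by positivity)]
        ring
    _ ≤ _ := ENNReal.toReal_mono ((measure_mono inter_subset_left).trans_lt measure_ball_lt_top).ne
        (measure_mono (cylinder_subset_ball_inter_ball hd1))

theorem le_volume_ball_inter_ball_div_volume_ball {m : ℕ}
    {c₁ c₂ : EuclideanSpace ℝ (Fin (m + 1))} {d : ℝ} (hd0 : 0 ≤ d) (hd1 : d ≤ 1)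
    (hdist : dist c₁ c₂ = d) :
    d / 3 * √(1 - d ^ 2) ^ m * √(m + 1) ≤
      (volume (ball c₁ 1 ∩ ball c₂ 1)).toReal / (volume (ball c₁ 1)).toReal := by
  rw [EuclideanSpace.volume_ball_one_toReal, le_div_iff₀ (unitBallVolume_pos _)]
  calc d / 3 * √(1 - d ^ 2) ^ m * √(m + 1) * unitBallVolume (m + 1)
      = d / 3 * √(1 - d ^ 2) ^ m * (√(m + 1) * unitBallVolume (m + 1)) := by ring
    _ ≤ d / 3 * √(1 - d ^ 2) ^ m * (3 * unitBallVolume m) := by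
        gcongr ?_ * ?_
        exact sqrt_mul_unitBallVolume_succ_le m
    _ = d * √(1 - d ^ 2) ^ m * unitBallVolume m := by ring
    _ ≤ _ := le_volume_ball_inter_ball hd0 hd1 hdist

theorem Real.rpow_div_two_le_rpow_sub_one_div_two_mul_sqrt {x t : ℝ} (hx0 : 0 ≤ x) (hx1 : x ≤ 1)
    (ht : 1 ≤ t) : x ^ (t / 2) ≤ x ^ ((t - 1) / 2) * √t :=
  calc x ^ (t / 2) ≤ x ^ ((t - 1) / 2) :=
        rpow_le_rpow_of_exponent_ge' hx0 hx1 (by linarith) (by linarith)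
    _ ≤ x ^ ((t - 1) / 2) * √t := le_mul_of_one_le_right (rpow_nonneg hx0 _) (one_le_sqrt.2 ht)

/-- The volume of the intersection of two unit balls whose centers are at distance
`d ≤ 1`, divided by the volume of one ball, is at least `(d/3)(1−d²)^{(n−1)/2}√n`,
and in particular at least `(d/3)(1−d²)^{n/2}`. -/
theorem inter_balls_volume_ge (n : ℕ) (hn : 1 ≤ n)
    (c₁ c₂ : EuclideanSpace ℝ (Fin n)) (d : ℝ) (hd0 : 0 ≤ d) (hd1 : d ≤ 1)
    (hdist : dist c₁ c₂ = d) :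
    (volume (Metric.ball c₁ 1 ∩ Metric.ball c₂ 1)).toReal
        / (volume (Metric.ball c₁ 1)).toReal
      ≥ d / 3 * (1 - d ^ 2) ^ (((n : ℝ) - 1) / 2) * Real.sqrt n
    ∧ d / 3 * (1 - d ^ 2) ^ (((n : ℝ) - 1) / 2) * Real.sqrt n
      ≥ d / 3 * (1 - d ^ 2) ^ ((n : ℝ) / 2) := by
  have hx0 : 0 ≤ 1 - d ^ 2 := by nlinarith
  refine ⟨?_, ?_⟩
  · obtain ⟨m, rfl⟩ : ∃ m, n = m + 1 := ⟨n - 1, by omega⟩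
    have hexp : ((m + 1 : ℕ) : ℝ) - 1 = m := by push_cast; ring
    rw [hexp, rpow_div_two_eq_sqrt _ hx0, rpow_natCast]
    exact_mod_cast le_volume_ball_inter_ball_div_volume_ball hd0 hd1 hdist
  · rw [mul_assoc]
    gcongr
    exact rpow_div_two_le_rpow_sub_one_div_two_mul_sqrt hx0 (by nlinarith) (by exact_mod_cast hn)
end

section
/- Let q ≥ 1, σ > 0, and λ ∈ ℤ. If X is distributed according to the discrete Gaussian D_{ℤ,σ}, then the bias of λX modulo q, namely E[exp(2iπλX/q)], equals ρ_{1/σ}(ℤ + λ/q)/ρ_{1/σ}(ℤ) ≥ exp(−πλ²σ²/q²); in particular it is real and positive. -/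
/-!
The identity is Poisson summation for the Gaussian: summing `ρ_σ(x) e(cx)` over `x ∈ ℤ` gives
`σ ρ_{1/σ}(ℤ + c)`, and with `c = 0` the normalising constant `ρ_σ(ℤ) = σ ρ_{1/σ}(ℤ)`.
For the lower bound, `exp(-π b (n + c)²) = exp(-π b c²) exp(-π b n²) exp(-2π b c n)`; since the
Gaussian is even, the last factor may be replaced by `cosh(2π b c n) ≥ 1`.
-/

open Real Complex

lemma summable_exp_neg_mul_add_sq {b : ℝ} (hb : 0 < b) (c : ℝ) :
    Summable fun n : ℤ => Real.exp (-π * b * (n + c) ^ 2) := by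
  convert HurwitzKernelBounds.summable_f_int 0 c hb using 2 with n
  simp only [HurwitzKernelBounds.f_int, pow_zero, one_mul]
  ring_nf

lemma tsum_le_tsum_mul_exp_of_even {f : ℤ → ℝ} (hf_nonneg : ∀ n, 0 ≤ f n)
    (hf_even : ∀ n, f (-n) = f n) (s : ℝ)
    (hs : Summable fun n : ℤ => f n * Real.exp (s * n)) :
    ∑' n, f n ≤ ∑' n, f n * Real.exp (s * n) := by
  have hs' : Summable fun n : ℤ => f n * Real.exp (-(s * n)) := by
    refine (hs.comp_injective neg_injective).congr fun n => ?_
    simp [hf_even]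
  have hsym : ∑' n : ℤ, f n * Real.exp (-(s * n)) = ∑' n : ℤ, f n * Real.exp (s * n) := by
    rw [← tsum_comp_neg]
    simp [hf_even]
  have hcosh : ∀ n : ℤ, f n ≤ (f n * Real.exp (s * n) + f n * Real.exp (-(s * n))) / 2 := by
    intro n
    calc f n = f n * 1 := (mul_one _).symm
      _ ≤ f n * Real.cosh (s * n) := mul_le_mul_of_nonneg_left (one_le_cosh _) (hf_nonneg n)
      _ = _ := by rw [cosh_eq]; ring
  have hsum := (hs.add hs').div_const 2
  calc ∑' n, f n ≤ ∑' n : ℤ, (f n * Real.exp (s * n) + f n * Real.exp (-(s * n))) / 2 :=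
        (hsum.of_nonneg_of_le hf_nonneg hcosh).tsum_le_tsum hcosh hsum
    _ = ∑' n, f n * Real.exp (s * n) := by
      rw [tsum_div_const, hs.tsum_add hs', hsym]
      ring

lemma exp_mul_tsum_le_tsum_exp_neg_mul_add_sq {b : ℝ} (hb : 0 < b) (c : ℝ) :
    Real.exp (-π * b * c ^ 2) * ∑' n : ℤ, Real.exp (-π * b * (n : ℝ) ^ 2)
      ≤ ∑' n : ℤ, Real.exp (-π * b * (n + c) ^ 2) := by
  have hfactor : ∀ n : ℤ, Real.exp (-π * b * (n + c) ^ 2)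
      = Real.exp (-π * b * c ^ 2) * (Real.exp (-π * b * (n : ℝ) ^ 2)
          * Real.exp (-2 * π * b * c * n)) := by
    intro n
    rw [← Real.exp_add, ← Real.exp_add]
    ring_nf
  have hs : Summable fun n : ℤ =>
      Real.exp (-π * b * (n : ℝ) ^ 2) * Real.exp (-2 * π * b * c * n) := by
    refine ((summable_exp_neg_mul_add_sq hb c).div_const (Real.exp (-π * b * c ^ 2))).congr ?_
    intro n
    rw [hfactor, mul_div_cancel_left₀ _ (Real.exp_pos _).ne']
  rw [tsum_congr hfactor, tsum_mul_left]
  refine mul_le_mul_of_nonneg_left ?_ (Real.exp_pos _).le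
  exact tsum_le_tsum_mul_exp_of_even (fun n => (Real.exp_pos _).le)
    (fun n => by rw [Int.cast_neg, neg_sq]) _ hs

lemma tsum_exp_neg_sq_div_sq_mul_cexp {σ : ℝ} (hσ : 0 < σ) (c : ℝ) :
    ∑' x : ℤ, (Real.exp (-π * (x : ℝ) ^ 2 / σ ^ 2) : ℂ) * cexp (2 * π * I * c * x)
      = σ * ∑' y : ℤ, (Real.exp (-π * σ ^ 2 * (y + c) ^ 2) : ℂ) := by
  have ha : 0 < ((σ : ℂ)⁻¹ ^ 2).re := by
    rw [← ofReal_inv, ← ofReal_pow, ofReal_re]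
    positivity
  have hsqrt : ((σ : ℂ)⁻¹ ^ 2) ^ (1 / 2 : ℂ) = (σ : ℂ)⁻¹ := by
    rw [one_div, sq_cpow_two_inv]
    rw [← ofReal_inv, ofReal_re]
    positivity
  have hpoisson := Complex.tsum_exp_neg_quadratic ha (I * c)
  rw [hsqrt, one_div, inv_inv] at hpoisson
  convert hpoisson using 1
  · refine tsum_congr fun x => ?_
    push_cast
    rw [← Complex.exp_add]
    congr 1
    field_simp
  · -- the Fourier side is centred at `n + I * (I * c) = n - c`
    rw [← tsum_comp_neg]
    congr 1
    refine tsum_congr fun y => ?_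
    rw [← mul_assoc, I_mul_I]
    push_cast
    congr 1
    field_simp
    ring

lemma tsum_exp_neg_sq_div_sq {σ : ℝ} (hσ : 0 < σ) :
    ∑' x : ℤ, Real.exp (-π * (x : ℝ) ^ 2 / σ ^ 2)
      = σ * ∑' y : ℤ, Real.exp (-π * σ ^ 2 * (y : ℝ) ^ 2) := by
  have h := tsum_exp_neg_sq_div_sq_mul_cexp hσ 0
  simp only [ofReal_zero, mul_zero, zero_mul, Complex.exp_zero, mul_one, add_zero] at h
  exact_mod_cast h

theorem bias_discrete_gaussian_general (q : ℕ) (σ : ℝ) (hσ : 0 < σ) (l : ℤ) :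
    (∑' x : ℤ,
        ((Real.exp (-π * (x : ℝ) ^ 2 / σ ^ 2)
            / ∑' k : ℤ, Real.exp (-π * (k : ℝ) ^ 2 / σ ^ 2) : ℝ) : ℂ)
          * Complex.exp (2 * π * Complex.I * (l : ℂ) * (x : ℂ) / (q : ℂ)))
      = (((∑' y : ℤ, Real.exp (-π * σ ^ 2 * ((y : ℝ) + (l : ℝ) / q) ^ 2))
          / ∑' y : ℤ, Real.exp (-π * σ ^ 2 * (y : ℝ) ^ 2) : ℝ) : ℂ)
    ∧ Real.exp (-π * (l : ℝ) ^ 2 * σ ^ 2 / q ^ 2)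
        ≤ (∑' y : ℤ, Real.exp (-π * σ ^ 2 * ((y : ℝ) + (l : ℝ) / q) ^ 2))
          / ∑' y : ℤ, Real.exp (-π * σ ^ 2 * (y : ℝ) ^ 2) := by
  set c : ℝ := l / q with hc
  have hb : 0 < σ ^ 2 := by positivity
  have hsummable : Summable fun y : ℤ => Real.exp (-π * σ ^ 2 * (y : ℝ) ^ 2) := by
    simpa using summable_exp_neg_mul_add_sq hb 0
  have hZ : 0 < ∑' y : ℤ, Real.exp (-π * σ ^ 2 * (y : ℝ) ^ 2) :=
    hsummable.tsum_pos (fun _ => (Real.exp_pos _).le) 0 (Real.exp_pos _)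
  constructor
  · have hphase : ∀ x : ℤ, 2 * π * I * (l : ℂ) * x / q = 2 * π * I * (c : ℂ) * x := by
      intro x
      push_cast [hc]
      ring
    simp_rw [hphase, ofReal_div, div_mul_eq_mul_div, tsum_div_const,
      tsum_exp_neg_sq_div_sq_mul_cexp hσ, tsum_exp_neg_sq_div_sq hσ, ofReal_mul, ofReal_tsum]
    exact mul_div_mul_left _ _ (ofReal_ne_zero.mpr hσ.ne')
  · rw [le_div_iff₀ hZ, show -π * (l : ℝ) ^ 2 * σ ^ 2 / q ^ 2 = -π * σ ^ 2 * c ^ 2 by ring]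
    exact exp_mul_tsum_le_tsum_exp_neg_mul_add_sq hb c

/-- For `X ∼ D_{ℤ,σ}` and `l ∈ ℤ`, the bias of `l·X` modulo `q` equals
`ρ_{1/σ}(ℤ + l/q)/ρ_{1/σ}(ℤ)` and is at least `exp(−π l² σ²/q²)`. -/
theorem bias_discrete_gaussian (q : ℕ) (hq : 1 ≤ q) (σ : ℝ) (hσ : 0 < σ) (l : ℤ) :
    (∑' x : ℤ,
        ((Real.exp (-π * (x : ℝ) ^ 2 / σ ^ 2)
            / ∑' k : ℤ, Real.exp (-π * (k : ℝ) ^ 2 / σ ^ 2) : ℝ) : ℂ)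
          * Complex.exp (2 * π * Complex.I * (l : ℂ) * (x : ℂ) / (q : ℂ)))
      = (((∑' y : ℤ, Real.exp (-π * σ ^ 2 * ((y : ℝ) + (l : ℝ) / q) ^ 2))
          / ∑' y : ℤ, Real.exp (-π * σ ^ 2 * (y : ℝ) ^ 2) : ℝ) : ℂ)
    ∧ Real.exp (-π * (l : ℝ) ^ 2 * σ ^ 2 / q ^ 2)
        ≤ (∑' y : ℤ, Real.exp (-π * σ ^ 2 * ((y : ℝ) + (l : ℝ) / q) ^ 2))
          / ∑' y : ℤ, Real.exp (-π * σ ^ 2 * (y : ℝ) ^ 2) :=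
  bias_discrete_gaussian_general q σ hσ l
end

section
/- Let s ∈ (ℤ/qℤ)^n, e ∈ (ℤ/qℤ)^m, and let x ∈ ℤ^m, y ∈ ℤ^n have coordinates drawn i.i.d. from D_{ℤ,σ}. Then the bias of ⟨s,y⟩ + ⟨e,x⟩ modulo q is at least exp(−π(‖s‖² + ‖e‖²)σ²/q²). -/
/-!
The bias factors over the independent coordinates into a product of values of the
characteristic function of `D_{ℤ,σ}`. By Poisson summation this characteristic function at `t` is
`Θ(t) / Θ(0)` with `Θ(t) = ∑ₖ exp(-πσ²(k - t)²)`, and pairing `k` with `-k` gives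
`Θ(t) ≥ exp(-πσ²t²) Θ(0)`, because the two terms add up to
`2 exp(-πσ²(k² + t²)) cosh(2πσ²tk)`.
-/

open scoped Real
open Real

theorem Fin.summable_norm_prod_and_hasSum_prod {R κ : Type*} [NormedCommRing R] [CompleteSpace R]
    {n : ℕ} (f : Fin n → κ → R) (hf : ∀ i, Summable fun k => ‖f i k‖) :
    (Summable fun x : Fin n → κ => ‖∏ i, f i (x i)‖) ∧
      HasSum (fun x : Fin n → κ => ∏ i, f i (x i)) (∏ i, ∑' k, f i k) := by
  induction n with
  | zero =>
    simp only [Finset.univ_eq_empty, Finset.prod_empty]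
    exact ⟨.of_finite, hasSum_single finZeroElim fun x hx => (hx (Subsingleton.elim _ _)).elim⟩
  | succ n ih =>
    set g : (Fin n → κ) → R := fun y => ∏ i, f i.succ (y i)
    obtain ⟨hg_norm, hg⟩ := ih (fun i => f i.succ) fun i => hf i.succ
    let E := Fin.consEquiv fun _ : Fin (n + 1) => κ
    have hE : (fun x => ∏ i, f i (x i)) ∘ E = fun p => f 0 p.1 * g p.2 := by
      ext p
      simp [E, g, Fin.prod_univ_succ]
    refine ⟨E.summable_iff.mp ?_, E.hasSum_iff.mp ?_⟩
    · exact ((hf 0).mul_norm hg_norm).congr fun p => congrArg norm (congrFun hE p).symm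
    · rw [hE, Fin.prod_univ_succ]
      exact (hf 0).of_norm.hasSum.mul hg
        (summable_mul_of_summable_norm (f := f 0) (hf 0) hg_norm)

theorem hasSum_prod_pi {ι R κ : Type*} [Fintype ι] [NormedCommRing R] [CompleteSpace R]
    (f : ι → κ → R) (hf : ∀ i, Summable fun k => ‖f i k‖) :
    HasSum (fun x : ι → κ => ∏ i, f i (x i)) (∏ i, ∑' k, f i k) := by
  let e := Fintype.equivFin ι
  have h := (Fin.summable_norm_prod_and_hasSum_prod (fun j => f (e.symm j)) fun j => hf _).2
  rw [← (e.arrowCongr (Equiv.refl κ)).symm.hasSum_iff, ← e.symm.prod_comp]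
  convert h using 1
  ext y
  simpa using e.prod_comp fun j => f (e.symm j) (y j)

lemma summable_exp_neg_mul_sq_sub {a : ℝ} (ha : 0 < a) (t : ℝ) :
    Summable fun k : ℤ => rexp (-π * a * (k - t) ^ 2) := by
  have h := ((summable_jacobiTheta₂_term_iff (-(a * t) * Complex.I) (a * Complex.I)).mpr
    (by simpa using ha)).norm
  refine (h.mul_right (rexp (-π * a * t ^ 2))).congr fun k => ?_
  rw [norm_jacobiTheta₂_term, ← Real.exp_add]
  congr 1
  simp
  ring

lemma exp_neg_mul_sq_mul_tsum_le {a : ℝ} (ha : 0 < a) (t : ℝ) :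
    rexp (-π * a * t ^ 2) * ∑' k : ℤ, rexp (-π * a * k ^ 2)
      ≤ ∑' k : ℤ, rexp (-π * a * (k - t) ^ 2) := by
  set G := fun k : ℤ => rexp (-π * a * (k - t) ^ 2)
  have hG : Summable G := summable_exp_neg_mul_sq_sub ha t
  have hG_neg : Summable fun k => G (-k) := hG.comp_injective neg_injective
  have h0 : Summable fun k : ℤ => rexp (-π * a * k ^ 2) := by
    simpa using summable_exp_neg_mul_sq_sub ha 0
  have hpair (k : ℤ) : rexp (-π * a * t ^ 2) * rexp (-π * a * k ^ 2) ≤ (G k + G (-k)) / 2 := by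
    have hk : G k = rexp (-π * a * t ^ 2) * rexp (-π * a * k ^ 2) * rexp (2 * π * a * t * k) := by
      simp only [G, ← Real.exp_add]; ring_nf
    have hnegk :
        G (-k) = rexp (-π * a * t ^ 2) * rexp (-π * a * k ^ 2) * rexp (-(2 * π * a * t * k)) := by
      simp only [G, ← Real.exp_add]; push_cast; ring_nf
    have hcosh : (G k + G (-k)) / 2
        = rexp (-π * a * t ^ 2) * rexp (-π * a * k ^ 2) * cosh (2 * π * a * t * k) := by
      rw [hk, hnegk, cosh_eq]; ring
    rw [hcosh]
    exact le_mul_of_one_le_right (by positivity) (one_le_cosh _)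
  calc rexp (-π * a * t ^ 2) * ∑' k : ℤ, rexp (-π * a * k ^ 2)
      = ∑' k : ℤ, rexp (-π * a * t ^ 2) * rexp (-π * a * k ^ 2) := tsum_mul_left.symm
    _ ≤ ∑' k : ℤ, (G k + G (-k)) / 2 :=
      (h0.mul_left _).tsum_le_tsum hpair ((hG.add hG_neg).div_const 2)
    _ = ∑' k : ℤ, G k := by
      rw [tsum_div_const, hG.tsum_add hG_neg, tsum_comp_neg G]
      ring

theorem tsum_exp_neg_sq_div_mul_cexp {σ : ℝ} (hσ : 0 < σ) (t : ℝ) :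
    ∑' k : ℤ, (rexp (-π * k ^ 2 / σ ^ 2) : ℂ) * Complex.exp (2 * π * Complex.I * t * k)
      = ((σ * ∑' k : ℤ, rexp (-π * σ ^ 2 * (k - t) ^ 2) : ℝ) : ℂ) := by
  have ha : 0 < ((σ ^ 2)⁻¹ : ℂ).re := by
    rw [← Complex.ofReal_pow, ← Complex.ofReal_inv, Complex.ofReal_re]; positivity
  have hroot : 1 / ((σ ^ 2)⁻¹ : ℂ) ^ (1 / 2 : ℂ) = σ := by
    rw [← Complex.ofReal_pow, ← Complex.ofReal_inv, show (1 / 2 : ℂ) = ((1 / 2 : ℝ) : ℂ) by simp,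
      ← Complex.ofReal_cpow (by positivity), ← Real.sqrt_eq_rpow, Real.sqrt_inv,
      Real.sqrt_sq hσ.le]
    simp
  calc ∑' k : ℤ, (rexp (-π * k ^ 2 / σ ^ 2) : ℂ) * Complex.exp (2 * π * Complex.I * t * k)
      = ∑' k : ℤ, Complex.exp (-π * ((σ : ℂ) ^ 2)⁻¹ * k ^ 2 + 2 * π * (Complex.I * t) * k) := by
        refine tsum_congr fun k => ?_
        rw [Complex.ofReal_exp, ← Complex.exp_add]
        push_cast
        ring_nf
    _ = σ * ∑' k : ℤ,
          Complex.exp (-π / ((σ : ℂ) ^ 2)⁻¹ * (k + Complex.I * (Complex.I * t)) ^ 2) := by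
        rw [Complex.tsum_exp_neg_quadratic ha, hroot]
    _ = _ := by
        rw [Complex.ofReal_mul, Complex.ofReal_tsum]
        congr 1
        refine tsum_congr fun k => ?_
        rw [Complex.ofReal_exp, ← mul_assoc, Complex.I_mul_I, div_inv_eq_mul]
        push_cast
        ring_nf

noncomputable def discreteGaussian (σ : ℝ) (k : ℤ) : ℝ :=
  rexp (-π * k ^ 2 / σ ^ 2) / ∑' j : ℤ, rexp (-π * j ^ 2 / σ ^ 2)

lemma summable_discreteGaussian {σ : ℝ} (hσ : 0 < σ) : Summable (discreteGaussian σ) :=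
  ((summable_exp_neg_mul_sq_sub (inv_pos.mpr (pow_pos hσ 2)) 0).div_const
    (∑' j : ℤ, rexp (-π * j ^ 2 / σ ^ 2))).congr fun k => by
    simp only [discreteGaussian, sub_zero]
    ring_nf

theorem tsum_discreteGaussian_mul_cexp {σ : ℝ} (hσ : 0 < σ) (t : ℝ) :
    ∑' k : ℤ, (discreteGaussian σ k : ℂ) * Complex.exp (2 * π * Complex.I * t * k)
      = ((∑' k : ℤ, rexp (-π * σ ^ 2 * (k - t) ^ 2)) / ∑' k : ℤ, rexp (-π * σ ^ 2 * k ^ 2) :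
          ℝ) := by
  have hS := tsum_exp_neg_sq_div_mul_cexp hσ 0
  simp only [Complex.ofReal_zero, mul_zero, zero_mul, Complex.exp_zero, mul_one, sub_zero,
    ← Complex.ofReal_tsum, Complex.ofReal_inj] at hS
  simp only [discreteGaussian, Complex.ofReal_div, div_mul_eq_mul_div, tsum_div_const,
    tsum_exp_neg_sq_div_mul_cexp hσ t, hS]
  push_cast
  rw [mul_div_mul_left _ _ (Complex.ofReal_ne_zero.mpr hσ.ne')]

lemma exp_neg_mul_sq_le_tsum_div_tsum {σ : ℝ} (hσ : 0 < σ) (t : ℝ) :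
    rexp (-π * σ ^ 2 * t ^ 2)
      ≤ (∑' k : ℤ, rexp (-π * σ ^ 2 * (k - t) ^ 2)) / ∑' k : ℤ, rexp (-π * σ ^ 2 * k ^ 2) := by
  have ha : 0 < σ ^ 2 := by positivity
  have hpos : 0 < ∑' k : ℤ, rexp (-π * σ ^ 2 * k ^ 2) := by
    simpa using
      (summable_exp_neg_mul_sq_sub ha 0).tsum_pos (fun _ => (exp_pos _).le) 0 (exp_pos _)
  rw [le_div_iff₀ hpos]
  exact exp_neg_mul_sq_mul_tsum_le ha t

theorem exp_neg_le_tsum_prod_discreteGaussian_mul_cos {ι : Type*} [Fintype ι] {σ : ℝ}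
    (hσ : 0 < σ) (t : ι → ℝ) :
    rexp (-π * σ ^ 2 * ∑ i, t i ^ 2)
      ≤ ∑' x : ι → ℤ, (∏ i, discreteGaussian σ (x i)) * cos (2 * π * ∑ i, t i * x i) := by
  set g : ι → ℤ → ℂ := fun i k =>
    discreteGaussian σ k * Complex.exp (2 * π * Complex.I * t i * k)
  have hg (i : ι) : Summable fun k => ‖g i k‖ := by
    refine (summable_discreteGaussian hσ).congr fun k => ?_
    have hk : 0 ≤ discreteGaussian σ k := by unfold discreteGaussian; positivity
    simp [g, Complex.norm_exp, abs_of_nonneg hk]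
  have hre (x : ι → ℤ) :
      (∏ i, g i (x i)).re = (∏ i, discreteGaussian σ (x i)) * cos (2 * π * ∑ i, t i * x i) := by
    have hphase :
        ∑ i, 2 * π * Complex.I * t i * x i = ((2 * π * ∑ i, t i * x i : ℝ) : ℂ) * Complex.I := by
      push_cast
      rw [Finset.mul_sum, Finset.sum_mul]
      exact Finset.sum_congr rfl fun i _ => by ring
    rw [Finset.prod_mul_distrib, ← Complex.ofReal_prod, ← Complex.exp_sum, Complex.re_ofReal_mul,
      hphase, Complex.exp_ofReal_mul_I_re]
  rw [tsum_congr fun x => (hre x).symm, (Complex.hasSum_re (hasSum_prod_pi g hg)).tsum_eq]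
  simp only [g, tsum_discreteGaussian_mul_cexp hσ, ← Complex.ofReal_prod, Complex.ofReal_re,
    Finset.mul_sum, Real.exp_sum]
  exact Finset.prod_le_prod (fun i _ => (exp_pos _).le)
    fun i _ => exp_neg_mul_sq_le_tsum_div_tsum hσ (t i)

theorem bias_inner_discrete_gaussian_general (q : ℕ) (n m : ℕ)
    (σ : ℝ) (hσ : 0 < σ) (s : Fin n → ZMod q) (e : Fin m → ZMod q) :
    Real.exp (-π * ((∑ i, ((s i).val : ℝ) ^ 2) + ∑ j, ((e j).val : ℝ) ^ 2)
        * σ ^ 2 / q ^ 2)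
      ≤ ∑' p : (Fin n → ℤ) × (Fin m → ℤ),
          (∏ i, Real.exp (-π * ((p.1 i : ℝ)) ^ 2 / σ ^ 2)
              / ∑' k : ℤ, Real.exp (-π * (k : ℝ) ^ 2 / σ ^ 2))
          * (∏ j, Real.exp (-π * ((p.2 j : ℝ)) ^ 2 / σ ^ 2)
              / ∑' k : ℤ, Real.exp (-π * (k : ℝ) ^ 2 / σ ^ 2))
          * Real.cos (2 * π
              * (((∑ i, ((s i).val : ℤ) * p.1 i) + ∑ j, ((e j).val : ℤ) * p.2 j : ℤ) : ℝ)
              / q) := by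
  have h := exp_neg_le_tsum_prod_discreteGaussian_mul_cos hσ
    (Sum.elim (fun i => ((s i).val : ℝ) / q) fun j => ((e j).val : ℝ) / q)
  rw [← (Equiv.sumArrowEquivProdArrow (Fin n) (Fin m) ℤ).tsum_eq]
  refine le_of_eq_of_le ?_ (h.trans_eq (tsum_congr fun x => ?_))
  · simp only [Fintype.sum_sum_type, Sum.elim_inl, Sum.elim_inr, div_pow, ← Finset.sum_div]
    congr 1
    ring
  · rw [Fintype.prod_sum_type, Fintype.sum_sum_type]
    congr 2
    simp only [Sum.elim_inl, Sum.elim_inr, Equiv.sumArrowEquivProdArrow_apply_fst,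
      Equiv.sumArrowEquivProdArrow_apply_snd, div_mul_eq_mul_div, ← Finset.sum_div]
    push_cast
    ring

/-- For fixed `s ∈ (ℤ/qℤ)ⁿ`, `e ∈ (ℤ/qℤ)ᵐ` and `x, y` with coordinates i.i.d. from
`D_{ℤ,σ}`, the bias of `⟨s,y⟩ + ⟨e,x⟩` modulo `q` is at least
`exp(−π(‖s‖² + ‖e‖²)σ²/q²)`. -/
theorem bias_inner_discrete_gaussian (q : ℕ) [NeZero q] (n m : ℕ)
    (σ : ℝ) (hσ : 0 < σ) (s : Fin n → ZMod q) (e : Fin m → ZMod q) :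
    Real.exp (-π * ((∑ i, ((s i).val : ℝ) ^ 2) + ∑ j, ((e j).val : ℝ) ^ 2)
        * σ ^ 2 / q ^ 2)
      ≤ ∑' p : (Fin n → ℤ) × (Fin m → ℤ),
          (∏ i, Real.exp (-π * ((p.1 i : ℝ)) ^ 2 / σ ^ 2)
              / ∑' k : ℤ, Real.exp (-π * (k : ℝ) ^ 2 / σ ^ 2))
          * (∏ j, Real.exp (-π * ((p.2 j : ℝ)) ^ 2 / σ ^ 2)
              / ∑' k : ℤ, Real.exp (-π * (k : ℝ) ^ 2 / σ ^ 2))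
          * Real.cos (2 * π
              * (((∑ i, ((s i).val : ℤ) * p.1 i) + ∑ j, ((e j).val : ℤ) * p.2 j : ℤ) : ℝ)
              / q) :=
  bias_inner_discrete_gaussian_general q n m σ hσ s e
end
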